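/- If the Hukuhara difference A ⊖ (B + C) exists for nonempty compact convex sets A, B, C in ℝ^n, then A ⊖ B and A ⊖ C also exist, and A ⊖ (B + C) = (A ⊖ B) ⊖ C = (A ⊖ C) ⊖ B. -/
import Mathlib


open scoped Pointwise

/-- `A` is a nonempty compact convex subset of `ℝ^n`. -/
def IsKc {n : ℕ} (A : Set (EuclideanSpace ℝ (Fin n))) : Prop :=
  A.Nonempty ∧ IsCompact A ∧ Convex ℝ A

/-- `C` is the Hukuhara difference `A ⊖ B`, i.e. `C ∈ K_c(ℝ^n)` and `A = B + C`. -/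
def HDiff {n : ℕ} (A B C : Set (EuclideanSpace ℝ (Fin n))) : Prop :=
  IsKc C ∧ A = B + C

lemma IsKc.add {n : ℕ} {A B : Set (EuclideanSpace ℝ (Fin n))} (hA : IsKc A) (hB : IsKc B) :
    IsKc (A + B) :=
  ⟨hA.1.add hB.1, hA.2.1.add hB.2.1, hA.2.2.add hB.2.2⟩

/-- If `A ⊖ (B + C) = D` exists, then `A ⊖ B` and `A ⊖ C` exist (being `C + D` and `B + D`
respectively), and `A ⊖ (B + C) = (A ⊖ B) ⊖ C = (A ⊖ C) ⊖ B`, i.e.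
`(A ⊖ B) ⊖ C = D` and `(A ⊖ C) ⊖ B = D`. -/
theorem hukuhara_diff_add {n : ℕ} (A B C D : Set (EuclideanSpace ℝ (Fin n)))
    (hA : IsKc A) (hB : IsKc B) (hC : IsKc C) (hD : HDiff A (B + C) D) :
    HDiff A B (C + D) ∧ HDiff A C (B + D) ∧
      HDiff (C + D) C D ∧ HDiff (B + D) B D := by
  obtain ⟨hDkc, hEq⟩ := hD
  refine ⟨⟨hC.add hDkc, ?_⟩, ⟨hB.add hDkc, ?_⟩, ⟨hDkc, rfl⟩, ⟨hDkc, rfl⟩⟩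
  · rw [hEq, add_assoc]
  · rw [hEq]; abel
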